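/- Let p be a prime, n ≥ 1, 1 ≤ t ≤ n, n′ = n+t+1, and let 𝒵 = { ξ(f + g + Σ_{r=1}^t x_{π_r(1)} x_{n+r} + Σ_{r=1}^t h_r x_{π_r(m_r)}) : h ∈ (Z_p)^t } be a traditional ZCZ sequence set from the paper's construction, where f(x) = Σ_{r=1}^t Σ_{α=1}^{m_r−1} x_{π_r(α)} x_{π_r(α+1)} + Σ_{α=1}^n d_α x_α (for a partition {V_1,…,V_t} of {1,…,n} with m_r = |V_r| and bijections π_r : {1,…,m_r} → V_r, d_α ∈ Z_p) and g = Σ_{r=2}^{t+1} c_r x_{n+r} x_{n+1} + Σ_{2≤μ<ν≤t} d_{μν} x_{n+μ} x_{n+ν} + Σ_{β=1}^{t+1} e_β x_{n+β} + e′ (coefficients in Z_p, c_{t+1} ≠ 0). Then for any h ≠ h′ in (Z_p)^t, the Hamming distance between the Z_p-valued vectors ξ corresponding to h and h′ is at least (p−1)p^{n′−1}; i.e., the minimum Hamming distance of 𝒵 is at least (p−1)p^{n′−1}. -/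

import Mathlib

/-!
The two functions differ by the linear form `x ↦ ∑_r (h_r - h'_r) x_{π_r(m_r)}`, all other terms
cancelling. The variables `x_{π_r(m_r)}` are distinct, so this form is nonzero as soon as `h ≠ h'`,
and a nonzero linear form on `(Z_p)^{n'}` vanishes on exactly `p^{n'-1}` points. Since `ξ` lists
the values of a function over all of `(Z_p)^{n'}` (the base-`p` digit expansion is a bijection),
the Hamming distance is the number of points where the form does not vanish, `(p-1)p^{n'-1}`.
-/

open Finset

/-- The `k`-th base-`p` digit of `x`, viewed as an element of `ZMod p`. -/
def digitZ (p x k : ℕ) : ZMod p := ((x / p ^ k) % p : ℕ)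

/-- The `Z_p`-valued vector `ξ(f)` of length `p^m` associated with an extended Boolean
function `f : (Z_p)^m → Z_p`. -/
def xiVec (p m : ℕ) (f : (Fin m → ZMod p) → ZMod p) : Fin (p ^ m) → ZMod p :=
  fun x => f fun k => digitZ p (x : ℕ) (k : ℕ)

lemma card_filter_apply_ne_zero {K V : Type*} [Field K] [Fintype K] [DecidableEq K]
    [AddCommGroup V] [Module K V] [Fintype V] (L : Module.Dual K V) (hL : L ≠ 0) :
    #{v | L v ≠ 0} = (Fintype.card K - 1) * Fintype.card K ^ (Module.finrank K V - 1) := by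
  have hrank := Module.Dual.finrank_ker_add_one_of_ne_zero hL
  have hker : #{v | L v = 0} = Nat.card (LinearMap.ker L) := by
    rw [← Fintype.card_subtype, ← Nat.card_eq_fintype_card]; rfl
  have hsplit := card_filter_add_card_filter_not (s := univ) (fun v => L v = 0)
  rw [card_univ, hker, Module.natCard_eq_pow_finrank (K := K) (V := LinearMap.ker L),
    Nat.card_eq_fintype_card, Module.card_eq_pow_finrank (K := K) (V := V), ← hrank,
    pow_succ'] at hsplit
  simp only [← ne_eq] at hsplit
  rw [← hrank, Nat.add_sub_cancel, Nat.sub_one_mul]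
  omega

lemma card_filter_sum_mul_apply_ne_zero {K ι κ : Type*} [Field K] [Fintype K] [DecidableEq K]
    [Fintype ι] [Fintype κ] [DecidableEq κ] {c : ι → κ} (hc : Function.Injective c)
    {a : ι → K} (ha : a ≠ 0) :
    #{v : κ → K | ∑ i, a i * v (c i) ≠ 0} =
      (Fintype.card K - 1) * Fintype.card K ^ (Fintype.card κ - 1) := by
  let L : Module.Dual K (κ → K) := ∑ i, a i • LinearMap.proj (c i)
  have hL : ∀ v, L v = ∑ i, a i * v (c i) := by simp [L]
  obtain ⟨i₀, hi₀⟩ := Function.ne_iff.mp ha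
  have hL₀ : L ≠ 0 := by
    intro h
    have hsingle : L (Pi.single (c i₀) 1) = a i₀ := by
      rw [hL, Fintype.sum_eq_single i₀ fun i hi => by simp [hc.ne hi]]
      simp
    exact hi₀ (by simpa [h] using hsingle.symm)
  simp_rw [← hL]
  rw [card_filter_apply_ne_zero L hL₀, Module.finrank_fintype_fun_eq_card]

def digitEquiv (p m : ℕ) [NeZero p] : Fin (p ^ m) ≃ (Fin m → ZMod p) :=
  finFunctionFinEquiv.symm.trans (Equiv.piCongrRight fun _ => (ZMod.finEquiv p).toEquiv)

lemma digitEquiv_apply (p m : ℕ) [NeZero p] (x : Fin (p ^ m)) (k : Fin m) :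
    digitEquiv p m x k = digitZ p x k := by
  obtain ⟨p, rfl⟩ : ∃ q, p = q + 1 := Nat.exists_eq_succ_of_ne_zero (NeZero.ne p)
  apply ZMod.val_injective
  rw [digitZ, ZMod.val_natCast, Nat.mod_mod]
  exact finFunctionFinEquiv_symm_apply_val x k

lemma hammingDist_xiVec (p m : ℕ) [NeZero p] (f g : (Fin m → ZMod p) → ZMod p) :
    hammingDist (xiVec p m f) (xiVec p m g) = #{v | f v ≠ g v} := by
  rw [hammingDist]
  refine card_equiv (digitEquiv p m) fun x => ?_
  rw [mem_filter, mem_filter, funext (digitEquiv_apply p m x)]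
  simp [xiVec]

lemma injective_last_of_injective_sigma {ι α : Type*} {m : ι → ℕ} (hm : ∀ r, 1 ≤ m r)
    {π : ι → ℕ → α} (hπ : Function.Injective fun q : Σ r, Fin (m r) => π q.1 q.2) :
    Function.Injective fun r => π r (m r - 1) := fun r s hrs =>
  congrArg Sigma.fst (@hπ ⟨r, m r - 1, by have := hm r; omega⟩
    ⟨s, m s - 1, by have := hm s; omega⟩ hrs)

/-- Corollary 5: for the traditional ZCZ sequence set
`𝒵 = { ξ(f + g + ∑_r x_{π_r(1)} x_{n+r} + ∑_r h_r x_{π_r(m_r)}) : h ∈ (Z_p)^t }` from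
the paper's construction, the Hamming distance between the `Z_p`-valued vectors
corresponding to distinct `h ≠ h'` is at least `(p−1)p^{n'−1}` where `n' = n+t+1`;
i.e. the minimum Hamming distance of `𝒵` is at least `(p−1)p^{n'−1} = (p−1)p^{n+t}`.
(Variables 0-indexed; encodings of the partition and of the coefficients of `g` are as
in the construction.) -/
theorem statement9 (p n t : ℕ) [Fact p.Prime]
    (m : Fin t → ℕ) (hm : ∀ r, 1 ≤ m r)
    (π : Fin t → ℕ → Fin n)
    (hπ : Function.Bijective fun q : Σ r : Fin t, Fin (m r) => π q.1 (q.2 : ℕ))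
    (d : Fin n → ZMod p)
    (cg : Fin t → ZMod p)
    (dg : Fin t → Fin t → ZMod p)
    (eg : Fin (t + 1) → ZMod p) (e' : ZMod p)
    (F : (Fin t → ZMod p) → (Fin (n + t + 1) → ZMod p) → ZMod p)
    (hF : ∀ h x, F h x =
      (∑ r : Fin t, ∑ α ∈ Finset.range (m r - 1),
        x (Fin.castLE (by omega) (π r α)) * x (Fin.castLE (by omega) (π r (α + 1)))) +
      (∑ α : Fin n, d α * x (Fin.castLE (by omega) α)) +
      (∑ r : Fin t, cg r *
        (x ⟨n + 1 + (r : ℕ), by have := r.isLt; omega⟩ * x ⟨n, by omega⟩)) +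
      (∑ μ : Fin t, ∑ ν : Fin t,
        if (μ : ℕ) < (ν : ℕ) ∧ (ν : ℕ) + 2 ≤ t then
          dg μ ν * (x ⟨n + 1 + (μ : ℕ), by have := μ.isLt; omega⟩ *
            x ⟨n + 1 + (ν : ℕ), by have := ν.isLt; omega⟩)
        else 0) +
      (∑ β : Fin (t + 1), eg β * x ⟨n + (β : ℕ), by have := β.isLt; omega⟩) + e' +
      (∑ r : Fin t, x (Fin.castLE (by omega) (π r 0)) *
        x ⟨n + (r : ℕ), by have := r.isLt; omega⟩) +
      (∑ r : Fin t, h r * x (Fin.castLE (by omega) (π r (m r - 1))))) :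
    ∀ h h' : Fin t → ZMod p, h ≠ h' →
      (p - 1) * p ^ (n + t) ≤
        hammingDist (xiVec p (n + t + 1) (F h)) (xiVec p (n + t + 1) (F h')) := by
  intro h h' hne
  let c : Fin t → Fin (n + t + 1) := fun r => Fin.castLE (by omega) (π r (m r - 1))
  have hc : Function.Injective c :=
    (Fin.castLE_injective _).comp (injective_last_of_injective_sigma hm hπ.1)
  have hdiff : ∀ x, F h x - F h' x = ∑ r, (h - h') r * x (c r) := fun x => by
    simp only [hF, add_sub_add_left_eq_sub, ← sum_sub_distrib, ← sub_mul, Pi.sub_apply, c]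
  have hne' : h - h' ≠ 0 := sub_ne_zero.mpr hne
  rw [hammingDist_xiVec, filter_congr fun x _ => by rw [← sub_ne_zero, hdiff],
    card_filter_sum_mul_apply_ne_zero hc hne', ZMod.card, Fintype.card_fin, Nat.add_sub_cancel]
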